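/- arXiv:1607.07370 — 3 statements merged into one kernel-verified Lean document; each statement's English description precedes it below -/
import Mathlib

section
/- Let ζ > 0 and let f, g : ℝ → ℝ be of class C⁶ on [0,1], both satisfying the beam boundary conditions. Then ∫₀¹ (f⁽⁴⁾(x) − ζ f⁽⁶⁾(x)) g(x) dx = ∫₀¹ f(x) (g⁽⁴⁾(x) − ζ g⁽⁶⁾(x)) dx; that is, the beam operator A₀f = f⁽⁴⁾ − ζ f⁽⁶⁾ is symmetric with respect to the L²(0,1) inner product on functions satisfying the beam boundary conditions. -/
open Set MeasureTheory intervalIntegral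

/-- `Dv m f x` is the `m`-th derivative of `f` on the interval `[0,1]`. -/
noncomputable def Dv (m : ℕ) (f : ℝ → ℝ) (x : ℝ) : ℝ :=
  iteratedDerivWithin m f (Icc (0:ℝ) 1) x

/-- The beam boundary conditions. -/
def BeamBC (ζ : ℝ) (f : ℝ → ℝ) : Prop :=
  f 0 = 0 ∧ Dv 1 f 0 = 0 ∧ Dv 2 f 0 = 0 ∧
  Dv 2 f 1 - ζ * Dv 4 f 1 = 0 ∧
  ζ * Dv 5 f 1 - Dv 3 f 1 = 0 ∧
  ζ * Dv 3 f 1 = 0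

/-- An eigenpair `(μ, φ)` of the beam problem. -/
def BeamEigenpair (ζ μ : ℝ) (φ : ℝ → ℝ) : Prop :=
  ContDiffOn ℝ 6 φ (Icc (0:ℝ) 1) ∧ BeamBC ζ φ ∧
  (¬ ∀ x ∈ Icc (0:ℝ) 1, φ x = 0) ∧
  (∀ x ∈ Icc (0:ℝ) 1, Dv 4 φ x - ζ * Dv 6 φ x = μ * φ x)

/-! Integrating by parts twice in `∫ g f⁽⁴⁾` and three times in `∫ g f⁽⁶⁾`, the boundary terms
at `0` vanish by the conditions on `g`, and those at `1` combine to
`g(1) (f‴ − ζ f⁽⁵⁾)(1) − g′(1) (f″ − ζ f⁽⁴⁾)(1) − g″(1) ζ f‴(1) = 0`. Hence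
`∫ g (f⁽⁴⁾ − ζ f⁽⁶⁾) = ∫ g″ f″ + ζ ∫ g‴ f‴`, which is symmetric in `f` and `g`. -/

section BeamOperator

variable {n k m : ℕ} {ζ : ℝ} {f g : ℝ → ℝ}

@[simp]
lemma Dv_zero : Dv 0 f = f := by
  funext x
  simp [Dv]

lemma continuousOn_Dv (hf : ContDiffOn ℝ n f (Icc 0 1)) (hm : m ≤ n) :
    ContinuousOn (Dv m f) (Icc 0 1) :=
  hf.continuousOn_iteratedDerivWithin (by exact_mod_cast hm) (uniqueDiffOn_Icc one_pos)

lemma hasDerivAt_Dv (hf : ContDiffOn ℝ n f (Icc 0 1)) (hm : m < n) {x : ℝ}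
    (hx : x ∈ Ioo 0 1) : HasDerivAt (Dv m f) (Dv (m + 1) f x) x := by
  have hdiff : DifferentiableOn ℝ (Dv m f) (Icc 0 1) :=
    hf.differentiableOn_iteratedDerivWithin (by exact_mod_cast hm) (uniqueDiffOn_Icc one_pos)
  have hderiv : derivWithin (Dv m f) (Icc 0 1) x = Dv (m + 1) f x := by
    rw [Dv, iteratedDerivWithin_succ]
    rfl
  rw [← hderiv]
  exact ((hdiff x (Ioo_subset_Icc_self hx)).hasDerivWithinAt).hasDerivAt
    (Icc_mem_nhds hx.1 hx.2)

lemma intervalIntegrable_Dv_mul_Dv (hf : ContDiffOn ℝ n f (Icc 0 1))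
    (hg : ContDiffOn ℝ n g (Icc 0 1)) (hk : k ≤ n) (hm : m ≤ n) :
    IntervalIntegrable (fun x => Dv k g x * Dv m f x) volume 0 1 :=
  ((continuousOn_Dv hg hk).mul (continuousOn_Dv hf hm)).intervalIntegrable_of_Icc zero_le_one

lemma integral_Dv_mul_Dv_succ (hf : ContDiffOn ℝ n f (Icc 0 1))
    (hg : ContDiffOn ℝ n g (Icc 0 1)) (hk : k < n) (hm : m < n) :
    ∫ x in (0:ℝ)..1, Dv k g x * Dv (m + 1) f x
      = Dv k g 1 * Dv m f 1 - Dv k g 0 * Dv m f 0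
        - ∫ x in (0:ℝ)..1, Dv (k + 1) g x * Dv m f x := by
  have hIoo : Ioo (min 0 1) (max 0 1) = Ioo (0:ℝ) 1 := by simp
  have hIcc : uIcc (0:ℝ) 1 = Icc 0 1 := uIcc_of_le zero_le_one
  refine integral_mul_deriv_eq_deriv_mul_of_hasDerivAt
    (hIcc ▸ continuousOn_Dv hg hk.le) (hIcc ▸ continuousOn_Dv hf hm.le)
    (hIoo ▸ fun x hx => hasDerivAt_Dv hg hk hx) (hIoo ▸ fun x hx => hasDerivAt_Dv hf hm hx)
    ?_ ?_ <;>
  exact (continuousOn_Dv (by assumption) (by omega)).intervalIntegrable_of_Icc zero_le_one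

lemma integral_mul_beamOp_eq (hf : ContDiffOn ℝ 6 f (Icc 0 1)) (hg : ContDiffOn ℝ 6 g (Icc 0 1))
    (hbf : BeamBC ζ f) (hbg : BeamBC ζ g) :
    ∫ x in (0:ℝ)..1, g x * (Dv 4 f x - ζ * Dv 6 f x)
      = (∫ x in (0:ℝ)..1, Dv 2 g x * Dv 2 f x) + ζ * ∫ x in (0:ℝ)..1, Dv 3 g x * Dv 3 f x := by
  obtain ⟨hg0, hg1, hg2, -, -, -⟩ := hbg
  obtain ⟨-, -, -, hf24, hf53, hf3⟩ := hbf
  have h4 : ∫ x in (0:ℝ)..1, g x * Dv 4 f x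
      = g 1 * Dv 3 f 1 - Dv 1 g 1 * Dv 2 f 1 + ∫ x in (0:ℝ)..1, Dv 2 g x * Dv 2 f x := by
    have e0 := integral_Dv_mul_Dv_succ hf hg (k := 0) (m := 3) (by norm_num) (by norm_num)
    have e1 := integral_Dv_mul_Dv_succ hf hg (k := 1) (m := 2) (by norm_num) (by norm_num)
    simp only [Dv_zero, Nat.reduceAdd] at e0 e1
    rw [e0, e1, hg0, hg1]
    ring
  have h6 : ∫ x in (0:ℝ)..1, g x * Dv 6 f x
      = g 1 * Dv 5 f 1 - Dv 1 g 1 * Dv 4 f 1 + Dv 2 g 1 * Dv 3 f 1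
        - ∫ x in (0:ℝ)..1, Dv 3 g x * Dv 3 f x := by
    have e0 := integral_Dv_mul_Dv_succ hf hg (k := 0) (m := 5) (by norm_num) (by norm_num)
    have e1 := integral_Dv_mul_Dv_succ hf hg (k := 1) (m := 4) (by norm_num) (by norm_num)
    have e2 := integral_Dv_mul_Dv_succ hf hg (k := 2) (m := 3) (by norm_num) (by norm_num)
    simp only [Dv_zero, Nat.reduceAdd] at e0 e1 e2
    rw [e0, e1, e2, hg0, hg1, hg2]
    ring
  have hsplit : ∫ x in (0:ℝ)..1, g x * (Dv 4 f x - ζ * Dv 6 f x)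
      = (∫ x in (0:ℝ)..1, g x * Dv 4 f x) - ζ * ∫ x in (0:ℝ)..1, g x * Dv 6 f x := by
    have i4 := intervalIntegrable_Dv_mul_Dv hf hg (k := 0) (m := 4) (by norm_num) (by norm_num)
    have i6 := intervalIntegrable_Dv_mul_Dv hf hg (k := 0) (m := 6) (by norm_num) (by norm_num)
    simp only [Dv_zero] at i4 i6
    rw [← intervalIntegral.integral_const_mul, ← intervalIntegral.integral_sub i4 (i6.const_mul ζ)]
    simp only [mul_sub, mul_left_comm]
  rw [hsplit, h4, h6]
  linear_combination -g 1 * hf53 - Dv 1 g 1 * hf24 - Dv 2 g 1 * hf3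

end BeamOperator

theorem stmt_1_general (ζ : ℝ) (f g : ℝ → ℝ)
    (hf : ContDiffOn ℝ 6 f (Icc (0:ℝ) 1)) (hg : ContDiffOn ℝ 6 g (Icc (0:ℝ) 1))
    (hbf : BeamBC ζ f) (hbg : BeamBC ζ g) :
    ∫ x in (0:ℝ)..1, (Dv 4 f x - ζ * Dv 6 f x) * g x
      = ∫ x in (0:ℝ)..1, f x * (Dv 4 g x - ζ * Dv 6 g x) := by
  calc ∫ x in (0:ℝ)..1, (Dv 4 f x - ζ * Dv 6 f x) * g x
      = ∫ x in (0:ℝ)..1, g x * (Dv 4 f x - ζ * Dv 6 f x) := by simp only [mul_comm]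
    _ = (∫ x in (0:ℝ)..1, Dv 2 g x * Dv 2 f x) + ζ * ∫ x in (0:ℝ)..1, Dv 3 g x * Dv 3 f x :=
      integral_mul_beamOp_eq hf hg hbf hbg
    _ = (∫ x in (0:ℝ)..1, Dv 2 f x * Dv 2 g x) + ζ * ∫ x in (0:ℝ)..1, Dv 3 f x * Dv 3 g x := by
      simp only [mul_comm (Dv _ g _)]
    _ = ∫ x in (0:ℝ)..1, f x * (Dv 4 g x - ζ * Dv 6 g x) :=
      (integral_mul_beamOp_eq hg hf hbg hbf).symm

/-- The beam operator `A₀ f = f⁽⁴⁾ − ζ f⁽⁶⁾` is symmetric with respect to the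
`L²(0,1)` inner product on functions satisfying the beam boundary conditions. -/
theorem stmt_1 (ζ : ℝ) (hζ : 0 < ζ) (f g : ℝ → ℝ)
    (hf : ContDiffOn ℝ 6 f (Icc (0:ℝ) 1)) (hg : ContDiffOn ℝ 6 g (Icc (0:ℝ) 1))
    (hbf : BeamBC ζ f) (hbg : BeamBC ζ g) :
    ∫ x in (0:ℝ)..1, (Dv 4 f x - ζ * Dv 6 f x) * g x
      = ∫ x in (0:ℝ)..1, f x * (Dv 4 g x - ζ * Dv 6 g x) :=
  stmt_1_general ζ f g hf hg hbf hbg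
end

section
/- Let ζ > 0 and let f : ℝ → ℝ be of class C⁶ on [0,1] satisfying the beam boundary conditions. If f⁽⁴⁾(x) − ζ f⁽⁶⁾(x) = 0 for all x ∈ [0,1], then f(x) = 0 for all x ∈ [0,1]; that is, the beam operator A₀f = f⁽⁴⁾ − ζ f⁽⁶⁾ is injective on functions satisfying the beam boundary conditions. -/
/-!
Integrating `f⁽⁴⁾ = ζ f⁽⁶⁾` twice from `x = 1`, where the boundary conditions make the constants
vanish, gives `f″ = ζ f⁽⁴⁾` on `[0,1]`. Then `g = f″` satisfies `g″ = g / ζ`, `g(0) = 0` and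
`g′(1) = 0`, which by an energy argument forces `g = 0`; two further integrations from `x = 0`
give `f = 0`.
-/

open Set MeasureTheory intervalIntegral

section Interval

variable {u u' : ℝ → ℝ} {a b : ℝ}

theorem eqOn_Icc_of_hasDerivWithinAt_zero
    (hu : ∀ x ∈ Icc a b, HasDerivWithinAt u (u' x) (Icc a b) x)
    (hu' : ∀ x ∈ Icc a b, u' x = 0) {y : ℝ} (hy : y ∈ Icc a b) :
    ∀ x ∈ Icc a b, u x = u y := by
  have hconst : ∀ x ∈ Icc a b, u x = u a := by
    refine constant_of_has_deriv_right_zero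
      (fun x hx => (hu x hx).continuousWithinAt) fun x hx => ?_
    have hx' : x ∈ Icc a b := Ico_subset_Icc_self hx
    rw [← hu' x hx']
    exact (hu x hx').mono_of_mem_nhdsWithin (Icc_mem_nhdsGE_of_mem hx)
  intro x hx
  rw [hconst x hx, hconst y hy]

theorem monotoneOn_Icc_of_hasDerivWithinAt_nonneg
    (hu : ∀ x ∈ Icc a b, HasDerivWithinAt u (u' x) (Icc a b) x)
    (hu' : ∀ x ∈ Icc a b, 0 ≤ u' x) : MonotoneOn u (Icc a b) := by
  refine monotoneOn_of_hasDerivWithinAt_nonneg (convex_Icc a b)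
    (fun x hx => (hu x hx).continuousWithinAt) (fun x hx => ?_)
    (fun x hx => hu' x (interior_subset hx))
  rw [interior_Icc] at hx ⊢
  exact ((hu x (Ioo_subset_Icc_self hx)).hasDerivAt
    (Icc_mem_nhds hx.1 hx.2)).hasDerivWithinAt

/-- The energy `g g'` is nondecreasing, since `(g g')' = g'² + c g² ≥ 0`, and it vanishes at
both ends; so it vanishes identically, which forces `g' = 0`. -/
theorem eqOn_Icc_zero_of_hasDerivWithinAt_of_nonneg_mul {g g' : ℝ → ℝ} {c : ℝ} (hab : a < b)
    (hc : 0 ≤ c) (hg : ∀ x ∈ Icc a b, HasDerivWithinAt g (g' x) (Icc a b) x)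
    (hg' : ∀ x ∈ Icc a b, HasDerivWithinAt g' (c * g x) (Icc a b) x)
    (ha : g a = 0) (hb : g' b = 0) : ∀ x ∈ Icc a b, g x = 0 := by
  have hE : ∀ x ∈ Icc a b,
      HasDerivWithinAt (fun y => g y * g' y) (g' x ^ 2 + c * g x ^ 2) (Icc a b) x := by
    intro x hx
    have := (hg x hx).mul (hg' x hx)
    rwa [show g' x * g' x + g x * (c * g x) = g' x ^ 2 + c * g x ^ 2 by ring] at this
  have hmono := monotoneOn_Icc_of_hasDerivWithinAt_nonneg hE fun x _ => by positivity
  have hab' := hab.le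
  have hE0 : ∀ x ∈ Icc a b, g x * g' x = 0 := fun x hx => le_antisymm
    (by simpa [hb] using hmono hx (right_mem_Icc.2 hab') hx.2)
    (by simpa [ha] using hmono (left_mem_Icc.2 hab') hx hx.1)
  have hg'0 : ∀ x ∈ Icc a b, g' x = 0 := by
    intro x hx
    have hzero : HasDerivWithinAt (fun y => g y * g' y) 0 (Icc a b) x :=
      (hasDerivWithinAt_const x _ 0).congr hE0 (hE0 x hx)
    have hsum : g' x ^ 2 + c * g x ^ 2 = 0 := (uniqueDiffOn_Icc hab x hx).eq_deriv _ (hE x hx) hzero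
    nlinarith [sq_nonneg (g' x), sq_nonneg (g x), mul_nonneg hc (sq_nonneg (g x))]
  intro x hx
  rw [eqOn_Icc_of_hasDerivWithinAt_zero hg hg'0 (left_mem_Icc.2 hab') x hx, ha]

end Interval

section Dv

variable {n : WithTop ℕ∞} {m : ℕ} {f : ℝ → ℝ}

theorem hasDerivWithinAt_Dv (hf : ContDiffOn ℝ n f (Icc 0 1)) (hm : m < n) {x : ℝ}
    (hx : x ∈ Icc (0:ℝ) 1) : HasDerivWithinAt (Dv m f) (Dv (m + 1) f x) (Icc 0 1) x := by
  have hd := hf.differentiableOn_iteratedDerivWithin hm (uniqueDiffOn_Icc zero_lt_one)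
  unfold Dv
  rw [iteratedDerivWithin_succ]
  exact (hd x hx).hasDerivWithinAt

theorem Dv_eqOn_zero_of_succ (hf : ContDiffOn ℝ n f (Icc 0 1)) (hm : m < n) {y : ℝ}
    (hy : y ∈ Icc (0:ℝ) 1) (hy0 : Dv m f y = 0)
    (hsucc : ∀ x ∈ Icc (0:ℝ) 1, Dv (m + 1) f x = 0) : ∀ x ∈ Icc (0:ℝ) 1, Dv m f x = 0 :=
  fun x hx => by
    rw [eqOn_Icc_of_hasDerivWithinAt_zero (fun z hz => hasDerivWithinAt_Dv hf hm hz) hsucc hy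
      x hx, hy0]

theorem mul_Dv_sub_Dv_eqOn_zero_of_succ {ζ : ℝ} (hf : ContDiffOn ℝ n f (Icc 0 1))
    (hm : ((m + 2 : ℕ) : WithTop ℕ∞) < n)
    (hsucc : ∀ x ∈ Icc (0:ℝ) 1, ζ * Dv (m + 3) f x - Dv (m + 1) f x = 0) {y : ℝ}
    (hy : y ∈ Icc (0:ℝ) 1) (hy0 : ζ * Dv (m + 2) f y - Dv m f y = 0) :
    ∀ x ∈ Icc (0:ℝ) 1, ζ * Dv (m + 2) f x - Dv m f x = 0 := fun x hx => by
  have hm' : (m : WithTop ℕ∞) < n := lt_of_le_of_lt (by exact_mod_cast m.le_add_right 2) hm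
  rw [eqOn_Icc_of_hasDerivWithinAt_zero (u := fun z => ζ * Dv (m + 2) f z - Dv m f z)
    (fun z hz => ((hasDerivWithinAt_Dv hf hm hz).const_mul ζ).sub (hasDerivWithinAt_Dv hf hm' hz))
    hsucc hy x hx, hy0]

end Dv

/-- The beam operator `A₀ f = f⁽⁴⁾ − ζ f⁽⁶⁾` is injective on functions
satisfying the beam boundary conditions. -/
theorem stmt_3 (ζ : ℝ) (hζ : 0 < ζ) (f : ℝ → ℝ)
    (hf : ContDiffOn ℝ 6 f (Icc (0:ℝ) 1)) (hbf : BeamBC ζ f)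
    (hode : ∀ x ∈ Icc (0:ℝ) 1, Dv 4 f x - ζ * Dv 6 f x = 0) :
    ∀ x ∈ Icc (0:ℝ) 1, f x = 0 := by
  obtain ⟨h0, h1, h2, h24, h53, h3⟩ := hbf
  have h0mem : (0:ℝ) ∈ Icc (0:ℝ) 1 := left_mem_Icc.2 zero_le_one
  have h1mem : (1:ℝ) ∈ Icc (0:ℝ) 1 := right_mem_Icc.2 zero_le_one
  have hD53 := mul_Dv_sub_Dv_eqOn_zero_of_succ (m := 3) hf (by norm_num)
    (fun x hx => by linarith [hode x hx]) h1mem h53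
  have hD42 := mul_Dv_sub_Dv_eqOn_zero_of_succ (m := 2) hf (by norm_num) hD53 h1mem
    (by linarith)
  have hD2 : ∀ x ∈ Icc (0:ℝ) 1, Dv 2 f x = 0 :=
    eqOn_Icc_zero_of_hasDerivWithinAt_of_nonneg_mul zero_lt_one (inv_nonneg.2 hζ.le)
      (fun x hx => hasDerivWithinAt_Dv hf (by norm_num) hx)
      (fun x hx => by
        convert hasDerivWithinAt_Dv (m := 3) hf (by norm_num) hx using 1
        field_simp
        linarith [hD42 x hx])
      h2 ((mul_eq_zero.mp h3).resolve_left hζ.ne')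
  have hD1 := Dv_eqOn_zero_of_succ (m := 1) hf (by norm_num) h0mem h1 hD2
  have hD0 := Dv_eqOn_zero_of_succ (m := 0) hf (by norm_num) h0mem (by simpa [Dv] using h0) hD1
  simpa [Dv] using hD0
end

section
/- Let ζ > 0. For every continuous function h : [0,1] → ℝ there exists a function f : ℝ → ℝ of class C⁶ on [0,1] satisfying the beam boundary conditions such that f⁽⁴⁾(x) − ζ f⁽⁶⁾(x) = h(x) for all x ∈ [0,1]; that is, the beam operator A₀f = f⁽⁴⁾ − ζ f⁽⁶⁾ with the beam boundary conditions is surjective onto continuous right-hand sides. -/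
open Set MeasureTheory intervalIntegral

/-!
Write `g = f''` and `k = ζ^(-1/2)`. The equation says `(g - ζ g'')'' = h`, and the boundary
conditions at `1` say that `g - ζ g''` and its derivative vanish there, so `g - ζ g''` is the
double primitive `w` of `h` taken from `1`. The equation `g'' = k² (g - w)` is solved by variation
of constants: `g x = A sinh (k x) - k ∫₀ˣ sinh (k (x - s)) w s ds` vanishes at `0`, and the
amplitude `A` is chosen to make `g' 1 = 0`. Integrating `g` twice from `0` gives `f`.
-/

noncomputable section

section DerivChain

variable {𝕜 E : Type*} [NontriviallyNormedField 𝕜] [NormedAddCommGroup E] [NormedSpace 𝕜 E]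
  {F : ℕ → 𝕜 → E} {s : Set 𝕜} {m : ℕ}

theorem iteratedDerivWithin_eqOn_of_hasDerivWithinAt_chain (hs : UniqueDiffOn 𝕜 s)
    (hF : ∀ n < m, ∀ x ∈ s, HasDerivWithinAt (F n) (F (n + 1) x) s x) :
    EqOn (iteratedDerivWithin m (F 0) s) (F m) s := by
  induction m with
  | zero => intro x _; simp
  | succ m ih =>
    intro x hx
    have hm : EqOn (iteratedDerivWithin m (F 0) s) (F m) s := ih fun n hn => hF n (by omega)
    rw [iteratedDerivWithin_succ, derivWithin_congr hm (hm hx)]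
    exact (hF m m.lt_succ_self x hx).derivWithin (hs x hx)

theorem contDiffOn_of_hasDerivWithinAt_chain (hs : UniqueDiffOn 𝕜 s)
    (hF : ∀ n < m, ∀ x ∈ s, HasDerivWithinAt (F n) (F (n + 1) x) s x)
    (hFm : ContinuousOn (F m) s) : ContDiffOn 𝕜 m (F 0) s := by
  induction m generalizing F with
  | zero => simpa using hFm
  | succ m ih =>
    have hF₀ : ∀ x ∈ s, HasDerivWithinAt (F 0) (F 1 x) s x := hF 0 m.succ_pos
    rw [Nat.cast_succ, contDiffOn_succ_iff_derivWithin hs]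
    refine ⟨fun x hx => (hF₀ x hx).differentiableWithinAt, by simp, ?_⟩
    exact (ih (F := fun n => F (n + 1)) (fun n hn => hF (n + 1) (by omega)) hFm).congr
      fun x hx => (hF₀ x hx).derivWithin (hs x hx)

end DerivChain

def primitive (a : ℝ) (g : ℝ → ℝ) (x : ℝ) : ℝ := ∫ t in a..x, g t

theorem primitive_self (a : ℝ) (g : ℝ → ℝ) : primitive a g a = 0 := integral_same

theorem hasDerivAt_primitive {g : ℝ → ℝ} (hg : Continuous g) (a x : ℝ) :
    HasDerivAt (primitive a g) (g x) x :=
  (hg.integral_hasStrictDerivAt a x).hasDerivAt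

theorem continuous_primitive {g : ℝ → ℝ} (hg : Continuous g) (a : ℝ) :
    Continuous (primitive a g) :=
  continuous_iff_continuousAt.2 fun x => (hasDerivAt_primitive hg a x).continuousAt

section HyperbolicConvolution

open Real

variable (k : ℝ) (r : ℝ → ℝ)

def sinhConv (x : ℝ) : ℝ := ∫ s in 0..x, sinh (k * (x - s)) * r s

def coshConv (x : ℝ) : ℝ := ∫ s in 0..x, cosh (k * (x - s)) * r s

variable {k r}

theorem sinhConv_eq (hr : Continuous r) (x : ℝ) :
    sinhConv k r x = sinh (k * x) * primitive 0 (fun s => cosh (k * s) * r s) x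
      - cosh (k * x) * primitive 0 (fun s => sinh (k * s) * r s) x := by
  simp only [sinhConv, primitive, mul_sub, sinh_sub, sub_mul, mul_assoc]
  rw [intervalIntegral.integral_sub, intervalIntegral.integral_const_mul,
    intervalIntegral.integral_const_mul] <;>
    exact (continuous_const.mul (by fun_prop)).intervalIntegrable _ _

theorem coshConv_eq (hr : Continuous r) (x : ℝ) :
    coshConv k r x = cosh (k * x) * primitive 0 (fun s => cosh (k * s) * r s) x
      - sinh (k * x) * primitive 0 (fun s => sinh (k * s) * r s) x := by
  simp only [coshConv, primitive, mul_sub, cosh_sub, sub_mul, mul_assoc]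
  rw [intervalIntegral.integral_sub, intervalIntegral.integral_const_mul,
    intervalIntegral.integral_const_mul] <;>
    exact (continuous_const.mul (by fun_prop)).intervalIntegrable _ _

theorem hasDerivAt_sinhConv (hr : Continuous r) (x : ℝ) :
    HasDerivAt (sinhConv k r) (k * coshConv k r x) x := by
  have hc := hasDerivAt_primitive (g := fun s => cosh (k * s) * r s) (by fun_prop) 0 x
  have hs := hasDerivAt_primitive (g := fun s => sinh (k * s) * r s) (by fun_prop) 0 x
  have hsinh := ((hasDerivAt_id' x).const_mul k).sinh
  have hcosh := ((hasDerivAt_id' x).const_mul k).cosh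
  rw [funext (sinhConv_eq hr), coshConv_eq hr]
  refine ((hsinh.mul hc).sub (hcosh.mul hs)).congr_deriv ?_
  ring

theorem hasDerivAt_coshConv (hr : Continuous r) (x : ℝ) :
    HasDerivAt (coshConv k r) (k * sinhConv k r x + r x) x := by
  have hc := hasDerivAt_primitive (g := fun s => cosh (k * s) * r s) (by fun_prop) 0 x
  have hs := hasDerivAt_primitive (g := fun s => sinh (k * s) * r s) (by fun_prop) 0 x
  have hsinh := ((hasDerivAt_id' x).const_mul k).sinh
  have hcosh := ((hasDerivAt_id' x).const_mul k).cosh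
  rw [funext (coshConv_eq hr), sinhConv_eq hr]
  refine ((hcosh.mul hc).sub (hsinh.mul hs)).congr_deriv ?_
  linear_combination (r x) * cosh_sq_sub_sinh_sq (k * x)

theorem sinhConv_zero : sinhConv k r 0 = 0 := integral_same

end HyperbolicConvolution

namespace Beam

open Real

variable (H : ℝ → ℝ) (k : ℝ)

def moment : ℝ → ℝ := primitive 1 (primitive 1 H)

def curvature (x : ℝ) : ℝ :=
  k * coshConv k (moment H) 1 / cosh k * sinh (k * x) - k * sinhConv k (moment H) x

def curvatureDeriv (x : ℝ) : ℝ :=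
  k ^ 2 * (coshConv k (moment H) 1 / cosh k * cosh (k * x) - coshConv k (moment H) x)

def deflection : ℝ → ℝ := primitive 0 (primitive 0 (curvature H k))

def deflectionDeriv : ℕ → ℝ → ℝ
  | 0 => deflection H k
  | 1 => primitive 0 (curvature H k)
  | 2 => curvature H k
  | 3 => curvatureDeriv H k
  | 4 => fun x => k ^ 2 * (curvature H k x - moment H x)
  | 5 => fun x => k ^ 2 * (curvatureDeriv H k x - primitive 1 H x)
  | _ => fun x => k ^ 2 * (k ^ 2 * (curvature H k x - moment H x) - H x)

variable {H k}

theorem continuous_moment (hH : Continuous H) : Continuous (moment H) :=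
  continuous_primitive (continuous_primitive hH 1) 1

theorem hasDerivAt_curvature (hH : Continuous H) (x : ℝ) :
    HasDerivAt (curvature H k) (curvatureDeriv H k x) x := by
  have hsinh := ((hasDerivAt_id' x).const_mul k).sinh
  refine ((hsinh.const_mul _).sub
    ((hasDerivAt_sinhConv (continuous_moment hH) x).const_mul k)).congr_deriv ?_
  simp only [curvatureDeriv]
  ring

theorem hasDerivAt_curvatureDeriv (hH : Continuous H) (x : ℝ) :
    HasDerivAt (curvatureDeriv H k) (k ^ 2 * (curvature H k x - moment H x)) x := by
  have hcosh := ((hasDerivAt_id' x).const_mul k).cosh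
  refine (((hcosh.const_mul _).sub
    (hasDerivAt_coshConv (continuous_moment hH) x)).const_mul (k ^ 2)).congr_deriv ?_
  simp only [curvature]
  ring

theorem continuous_curvature (hH : Continuous H) : Continuous (curvature H k) :=
  continuous_iff_continuousAt.2 fun x => (hasDerivAt_curvature hH x).continuousAt

theorem curvature_zero : curvature H k 0 = 0 := by
  simp [curvature, sinhConv_zero]

theorem curvatureDeriv_one : curvatureDeriv H k 1 = 0 := by
  simp [curvatureDeriv, (cosh_pos k).ne']

theorem hasDerivAt_deflectionDeriv (hH : Continuous H) :
    ∀ n < 6, ∀ x, HasDerivAt (deflectionDeriv H k n) (deflectionDeriv H k (n + 1) x) x := by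
  intro n hn x
  interval_cases n
  · exact hasDerivAt_primitive (continuous_primitive (continuous_curvature hH) 0) 0 x
  · exact hasDerivAt_primitive (continuous_curvature hH) 0 x
  · exact hasDerivAt_curvature hH x
  · exact hasDerivAt_curvatureDeriv hH x
  · exact ((hasDerivAt_curvature hH x).sub
      (hasDerivAt_primitive (continuous_primitive hH 1) 1 x)).const_mul (k ^ 2)
  · exact ((hasDerivAt_curvatureDeriv hH x).sub (hasDerivAt_primitive hH 1 x)).const_mul (k ^ 2)

theorem dv_deflection (hH : Continuous H) {n : ℕ} (hn : n ≤ 6) {x : ℝ} (hx : x ∈ Icc 0 1) :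
    Dv n (deflection H k) x = deflectionDeriv H k n x :=
  iteratedDerivWithin_eqOn_of_hasDerivWithinAt_chain (uniqueDiffOn_Icc one_pos)
    (fun m hm y _ => (hasDerivAt_deflectionDeriv hH m (by omega) y).hasDerivWithinAt) hx

theorem contDiffOn_deflection (hH : Continuous H) :
    ContDiffOn ℝ 6 (deflection H k) (Icc 0 1) := by
  have hcont : Continuous (deflectionDeriv H k 6) := by
    have := continuous_curvature (k := k) hH
    have := continuous_moment hH
    simp only [deflectionDeriv]
    fun_prop
  exact contDiffOn_of_hasDerivWithinAt_chain (m := 6) (uniqueDiffOn_Icc one_pos)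
    (fun n hn y _ => (hasDerivAt_deflectionDeriv hH n hn y).hasDerivWithinAt) hcont.continuousOn

theorem beamBC_deflection (hH : Continuous H) {ζ : ℝ} (hk : ζ * k ^ 2 = 1) :
    BeamBC ζ (deflection H k) := by
  have h0 : (0 : ℝ) ∈ Icc 0 1 := left_mem_Icc.2 zero_le_one
  have h1 : (1 : ℝ) ∈ Icc 0 1 := right_mem_Icc.2 zero_le_one
  rw [BeamBC, dv_deflection hH (n := 1) (by norm_num) h0,
    dv_deflection hH (n := 2) (by norm_num) h0, dv_deflection hH (n := 2) (by norm_num) h1,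
    dv_deflection hH (n := 3) (by norm_num) h1, dv_deflection hH (n := 4) (by norm_num) h1,
    dv_deflection hH (n := 5) (by norm_num) h1]
  simp only [deflectionDeriv, deflection, moment, primitive_self, curvature_zero,
    curvatureDeriv_one, sub_zero, mul_zero, true_and, and_true]
  linear_combination (-curvature H k 1) * hk

theorem deflection_equation (hH : Continuous H) {ζ : ℝ} (hk : ζ * k ^ 2 = 1) {x : ℝ}
    (hx : x ∈ Icc 0 1) : Dv 4 (deflection H k) x - ζ * Dv 6 (deflection H k) x = H x := by
  rw [dv_deflection hH (by norm_num) hx, dv_deflection hH (by norm_num) hx]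
  simp only [deflectionDeriv]
  linear_combination (H x - k ^ 2 * (curvature H k x - moment H x)) * hk

end Beam

end

open Beam in
/-- The beam operator `A₀ f = f⁽⁴⁾ − ζ f⁽⁶⁾` with the beam boundary conditions
is surjective onto continuous right-hand sides. -/
theorem stmt_4 (ζ : ℝ) (hζ : 0 < ζ) (h : ℝ → ℝ)
    (hh : ContinuousOn h (Icc (0:ℝ) 1)) :
    ∃ f : ℝ → ℝ, ContDiffOn ℝ 6 f (Icc (0:ℝ) 1) ∧ BeamBC ζ f ∧
      ∀ x ∈ Icc (0:ℝ) 1, Dv 4 f x - ζ * Dv 6 f x = h x := by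
  let H : ℝ → ℝ := IccExtend zero_le_one ((Icc 0 1).domRestrict h)
  have hH : Continuous H := hh.domRestrict.Icc_extend'
  have hk : ζ * (√ζ)⁻¹ ^ 2 = 1 := by
    rw [inv_pow, Real.sq_sqrt hζ.le, mul_inv_cancel₀ hζ.ne']
  refine ⟨deflection H (√ζ)⁻¹, contDiffOn_deflection hH, beamBC_deflection hH hk,
    fun x hx => ?_⟩
  rw [deflection_equation hH hk hx]
  exact IccExtend_of_mem _ _ hx
end
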